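/- For α = 1 and t > 0, the limit as N → ∞ of (1/ln N) · Σ_{j=1}^{N} 1/(1 + (j t)^β)^{1/β} equals 1/t, for any β > 0. -/

import Mathlib

/-!
For `x > 0` the summand `(1 + x^β)^(-1/β)` lies between `1/x - x^(-1-β)/β` and `1/x`: writing
`(1 + x^β)^(1/β) = x (1 + x^(-β))^(1/β)` and using `1 + u ≤ exp u` twice. Hence the sum differs
from `H_N / t` by the partial sums of a convergent series, and `H_N / ln N → 1`.
-/

open Filter Finset Topology

lemma tendsto_log_natCast_atTop : Tendsto (fun N : ℕ => Real.log N) atTop atTop :=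
  Real.tendsto_log_atTop.comp tendsto_natCast_atTop_atTop

lemma tendsto_sum_Icc_one_of_summable {f : ℕ → ℝ} (hf : Summable f) :
    Tendsto (fun N : ℕ => ∑ j ∈ Icc 1 N, f j) atTop (𝓝 (∑' j, f j - f 0)) := by
  have hsum (N : ℕ) : ∑ j ∈ Icc 1 N, f j = ∑ j ∈ range (N + 1), f j - f 0 := by
    rw [range_eq_Ico, sum_eq_sum_Ico_succ_bot (by omega : 0 < N + 1), zero_add,
      Ico_add_one_right_eq_Icc]
    ring
  simp only [hsum]
  exact ((tendsto_add_atTop_iff_nat 1).mpr hf.tendsto_sum_tsum_nat).sub_const _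

lemma tendsto_sum_Icc_div_log_of_summable_sub {a b : ℕ → ℝ} {c : ℝ}
    (hab : Summable fun j => a j - b j)
    (ha : Tendsto (fun N : ℕ => (∑ j ∈ Icc 1 N, a j) / Real.log N) atTop (𝓝 c)) :
    Tendsto (fun N : ℕ => (∑ j ∈ Icc 1 N, b j) / Real.log N) atTop (𝓝 c) := by
  have herr := (tendsto_sum_Icc_one_of_summable hab).div_atTop tendsto_log_natCast_atTop
  convert ha.sub herr using 2 with N
  · rw [sum_sub_distrib, ← sub_div, sub_sub_cancel]
  · rw [sub_zero]

lemma tendsto_harmonic_div_log :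
    Tendsto (fun N : ℕ => (harmonic N : ℝ) / Real.log N) atTop (𝓝 1) := by
  have h := (Real.tendsto_harmonic_sub_log.div_atTop tendsto_log_natCast_atTop).const_add 1
  rw [add_zero] at h
  refine h.congr' ?_
  filter_upwards [tendsto_log_natCast_atTop.eventually_ne_atTop 0] with N hN
  field_simp
  ring

lemma tendsto_sum_Icc_one_div_mul_div_log (t : ℝ) :
    Tendsto (fun N : ℕ => (∑ j ∈ Icc 1 N, 1 / ((j : ℝ) * t)) / Real.log N) atTop (𝓝 (1 / t)) := by
  have h := tendsto_harmonic_div_log.mul_const t⁻¹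
  rw [one_mul, ← one_div] at h
  convert h using 2 with N
  simp only [one_div, mul_inv, ← sum_mul, harmonic_eq_sum_Icc, Rat.cast_sum, Rat.cast_inv,
    Rat.cast_natCast]
  ring

section CauchyTerm

variable {β x : ℝ}

lemma one_div_one_add_rpow_rpow_inv_le (hβ : 0 < β) (hx : 0 < x) :
    1 / (1 + x ^ β) ^ (1 / β) ≤ 1 / x := by
  refine one_div_le_one_div_of_le hx ?_
  calc x = (x ^ β) ^ (1 / β) := by rw [one_div, Real.rpow_rpow_inv hx.le hβ.ne']
    _ ≤ (1 + x ^ β) ^ (1 / β) := by gcongr; linarith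

lemma one_add_rpow_rpow_inv_le_exp (hβ : 0 < β) {u : ℝ} (hu : 0 ≤ u) :
    (1 + u) ^ (1 / β) ≤ Real.exp (u / β) := by
  calc (1 + u) ^ (1 / β) ≤ Real.exp u ^ (1 / β) := by
        gcongr; linarith [Real.add_one_le_exp u]
    _ = Real.exp (u / β) := by rw [← Real.exp_mul, mul_one_div]

lemma one_div_sub_one_div_one_add_rpow_rpow_inv_le (hβ : 0 < β) (hx : 0 < x) :
    1 / x - 1 / (1 + x ^ β) ^ (1 / β) ≤ x ^ (-(1 + β)) / β := by
  set u := x ^ (-β)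
  have hfactor : (1 + x ^ β) ^ (1 / β) = x * (1 + u) ^ (1 / β) := by
    rw [show 1 + x ^ β = x ^ β * (1 + u) by
        rw [mul_add, mul_one, ← Real.rpow_add hx, add_neg_cancel, Real.rpow_zero, add_comm],
      Real.mul_rpow (by positivity) (by positivity), one_div, Real.rpow_rpow_inv hx.le hβ.ne']
  have hxu : x ^ (-(1 + β)) = u / x := by
    rw [neg_add, Real.rpow_add hx, Real.rpow_neg_one, div_eq_mul_inv, mul_comm]
  calc 1 / x - 1 / (1 + x ^ β) ^ (1 / β)
      ≤ 1 / x - 1 / (x * Real.exp (u / β)) := by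
        rw [hfactor]
        gcongr
        exact one_add_rpow_rpow_inv_le_exp hβ (by positivity)
    _ = (1 - Real.exp (-(u / β))) / x := by rw [Real.exp_neg]; field_simp
    _ ≤ x ^ (-(1 + β)) / β := by
        rw [hxu, div_div, mul_comm, ← div_div]
        gcongr
        linarith [Real.add_one_le_exp (-(u / β))]

lemma abs_one_div_sub_one_div_one_add_rpow_rpow_inv_le (hβ : 0 < β) (hx : 0 < x) :
    |1 / x - 1 / (1 + x ^ β) ^ (1 / β)| ≤ x ^ (-(1 + β)) / β :=
  abs_le.mpr
    ⟨by linarith [one_div_one_add_rpow_rpow_inv_le hβ hx,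
        show 0 ≤ x ^ (-(1 + β)) / β by positivity],
      one_div_sub_one_div_one_add_rpow_rpow_inv_le hβ hx⟩

lemma summable_one_div_mul_sub_one_div_one_add_rpow (hβ : 0 < β) {t : ℝ} (ht : 0 < t) :
    Summable fun j : ℕ => 1 / ((j : ℝ) * t) - 1 / (1 + ((j : ℝ) * t) ^ β) ^ (1 / β) := by
  have hbound : Summable fun j : ℕ => ((j : ℝ) * t) ^ (-(1 + β)) / β := by
    simp only [Real.mul_rpow (Nat.cast_nonneg _) ht.le]
    exact ((Real.summable_nat_rpow.mpr (by linarith)).mul_right _).div_const _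
  refine hbound.of_norm_bounded_eventually_nat ?_
  filter_upwards [eventually_ge_atTop 1] with j hj
  exact abs_one_div_sub_one_div_one_add_rpow_rpow_inv_le hβ (by positivity)

end CauchyTerm

/-- Cauchy family, α = 1: (1/ln N) Σ_{j=1}^N (1+(jt)^β)^{-1/β} → 1/t. -/
theorem cauchy_family_limit_eq_one (β t : ℝ) (hβ : 0 < β) (ht : 0 < t) :
    Tendsto (fun N : ℕ =>
        (1 / Real.log N) * ∑ j ∈ Finset.Icc 1 N, 1 / (1 + ((j : ℝ) * t) ^ β) ^ (1 / β))
      atTop (nhds (1 / t)) := by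
  simp only [one_div_mul_eq_div]
  exact tendsto_sum_Icc_div_log_of_summable_sub
    (summable_one_div_mul_sub_one_div_one_add_rpow hβ ht) (tendsto_sum_Icc_one_div_mul_div_log t)
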